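/- arXiv:math/0507553 — 3 statements merged into one kernel-verified Lean document; each statement's English description precedes it below -/
import Mathlib

section
/- For real λ, μ and integers p ≥ 1, with C_n(λ) := (λ)_n/n! (and C_n = 0 for n < 0), one has Σ_{ℓ=0}^{p} ℓ² · C_{p−ℓ}(λ) · C_ℓ(μ) = μ · ( C_{p−1}(λ+μ+2) + μ · C_{p−2}(λ+μ+2) ). -/
/-- Pochhammer coefficient C_n(x) = (x)_n / n!, zero for negative index. -/
noncomputable def pochC (n : ℤ) (x : ℝ) : ℝ :=
  if 0 ≤ n then (ascPochhammer ℝ n.toNat).eval x / (Nat.factorial n.toNat) else 0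

noncomputable def Cc (n : ℕ) (x : ℝ) : ℝ := (ascPochhammer ℝ n).eval x / n.factorial

lemma Cc_zero (x : ℝ) : Cc 0 x = 1 := by simp [Cc]

lemma Cc_absorb (n : ℕ) (x : ℝ) : (n + 1 : ℝ) * Cc (n+1) x = x * Cc n (x+1) := by
  have h : (ascPochhammer ℝ (n+1)).eval x = x * (ascPochhammer ℝ n).eval (x+1) := by
    rw [ascPochhammer_succ_left]
    simp [Polynomial.eval_comp]
  simp only [Cc, h, Nat.factorial_succ, Nat.cast_mul]
  have : (n.factorial : ℝ) ≠ 0 := by positivity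
  push_cast
  field_simp

lemma Cc_pascal (n : ℕ) (x : ℝ) : Cc (n+1) (x+1) = Cc (n+1) x + Cc n (x+1) := by
  have h1 : (ascPochhammer ℝ (n+1)).eval (x+1) = (ascPochhammer ℝ n).eval (x+1) * (x+1+n) :=
    ascPochhammer_succ_eval n (x+1)
  have h2 : (ascPochhammer ℝ (n+1)).eval x = x * (ascPochhammer ℝ n).eval (x+1) := by
    rw [ascPochhammer_succ_left]
    simp [Polynomial.eval_comp]
  simp only [Cc, h1, h2, Nat.factorial_succ, Nat.cast_mul]
  have hf : (n.factorial : ℝ) ≠ 0 := by positivity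
  have hn : ((n : ℝ) + 1) ≠ 0 := by positivity
  push_cast
  field_simp
  ring

lemma Cc_vandermonde (p : ℕ) : ∀ lam mu : ℝ,
    ∑ ℓ ∈ Finset.range (p + 1), Cc (p - ℓ) lam * Cc ℓ mu = Cc p (lam + mu) := by
  induction p with
  | zero => intro lam mu; simp [Cc_zero]
  | succ p ih =>
    intro lam mu
    have hpos : (p + 1 : ℝ) ≠ 0 := by positivity
    apply mul_left_cancel₀ hpos
    have hA : ∑ ℓ ∈ Finset.range (p + 2), ((p + 1 - ℓ : ℕ) : ℝ) * Cc (p + 1 - ℓ) lam * Cc ℓ mu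
        = lam * Cc p (lam + mu + 1) := by
      rw [Finset.sum_range_succ]
      simp only [Nat.sub_self, Nat.cast_zero, zero_mul, add_zero]
      have : ∀ ℓ ∈ Finset.range (p + 1),
          ((p + 1 - ℓ : ℕ) : ℝ) * Cc (p + 1 - ℓ) lam * Cc ℓ mu
          = lam * (Cc (p - ℓ) (lam + 1) * Cc ℓ mu) := by
        intro ℓ hℓ
        rw [Finset.mem_range] at hℓ
        have h1 : p + 1 - ℓ = (p - ℓ) + 1 := by omega
        rw [h1]
        have h2 : ((p - ℓ + 1 : ℕ) : ℝ) = ((p - ℓ : ℕ) : ℝ) + 1 := by push_cast; ring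
        rw [h2, ← mul_assoc, Cc_absorb]
      rw [Finset.sum_congr rfl this, ← Finset.mul_sum, ih (lam + 1) mu]
      ring_nf
    have hB : ∑ ℓ ∈ Finset.range (p + 2), (ℓ : ℝ) * Cc (p + 1 - ℓ) lam * Cc ℓ mu
        = mu * Cc p (lam + mu + 1) := by
      rw [Finset.sum_range_succ']
      simp only [Nat.cast_zero, zero_mul, add_zero]
      have : ∀ j ∈ Finset.range (p + 1),
          ((j + 1 : ℕ) : ℝ) * Cc (p + 1 - (j + 1)) lam * Cc (j + 1) mu
          = mu * (Cc (p - j) lam * Cc j (mu + 1)) := by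
        intro j hj
        have h1 : p + 1 - (j + 1) = p - j := by omega
        have h2 : ((j + 1 : ℕ) : ℝ) = ((j : ℕ) : ℝ) + 1 := by push_cast; ring
        rw [h1, h2, mul_right_comm, Cc_absorb j mu]
        ring
      rw [Finset.sum_congr rfl this, ← Finset.mul_sum, ih lam (mu + 1)]
      ring_nf
    have key : (p + 1 : ℝ) * ∑ ℓ ∈ Finset.range (p + 1 + 1), Cc (p + 1 - ℓ) lam * Cc ℓ mu
        = (lam + mu) * Cc p (lam + mu + 1) := by
      rw [Finset.mul_sum]
      have : ∀ ℓ ∈ Finset.range (p + 2),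
          (p + 1 : ℝ) * (Cc (p + 1 - ℓ) lam * Cc ℓ mu)
          = ((p + 1 - ℓ : ℕ) : ℝ) * Cc (p + 1 - ℓ) lam * Cc ℓ mu
            + (ℓ : ℝ) * Cc (p + 1 - ℓ) lam * Cc ℓ mu := by
        intro ℓ hℓ
        rw [Finset.mem_range] at hℓ
        have : ((p + 1 - ℓ : ℕ) : ℝ) + (ℓ : ℝ) = (p + 1 : ℝ) := by
          have h : (p + 1 - ℓ) + ℓ = p + 1 := by omega
          calc ((p + 1 - ℓ : ℕ) : ℝ) + (ℓ : ℝ) = (((p + 1 - ℓ) + ℓ : ℕ) : ℝ) := by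
                push_cast; ring
          _ = _ := by rw [h]; push_cast; ring
        rw [← this]; ring
      rw [Finset.sum_congr rfl this, Finset.sum_add_distrib, hA, hB]
      ring
    rw [key]
    rw [show (lam + mu + 1) = (lam + mu) + 1 by ring] at *
    rw [← Cc_absorb p (lam + mu)]

lemma key_sum (q : ℕ) (lam mu : ℝ) :
    ∑ ℓ ∈ Finset.range (q + 3), (ℓ : ℝ) ^ 2 * Cc (q + 2 - ℓ) lam * Cc ℓ mu
      = mu * (Cc (q + 1) (lam + mu + 2) + mu * Cc q (lam + mu + 2)) := by
  rw [Finset.sum_range_succ']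
  simp only [Nat.cast_zero, ne_eq, OfNat.ofNat_ne_zero, not_false_eq_true, zero_pow, zero_mul,
    add_zero]
  have step1 : ∀ j ∈ Finset.range (q + 2),
      ((j + 1 : ℕ) : ℝ) ^ 2 * Cc (q + 2 - (j + 1)) lam * Cc (j + 1) mu
      = mu * ((j : ℝ) * (Cc (q + 1 - j) lam * Cc j (mu + 1))
          + Cc (q + 1 - j) lam * Cc j (mu + 1)) := by
    intro j hj
    have h1 : q + 2 - (j + 1) = q + 1 - j := by omega
    rw [h1]
    have habs := Cc_absorb j mu
    push_cast
    linear_combination ((j : ℝ) + 1) * Cc (q + 1 - j) lam * habs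
  rw [Finset.sum_congr rfl step1, ← Finset.mul_sum, Finset.sum_add_distrib]
  have hV1 : ∑ j ∈ Finset.range (q + 2), Cc (q + 1 - j) lam * Cc j (mu + 1)
      = Cc (q + 1) (lam + mu + 1) := by
    rw [Cc_vandermonde (q + 1) lam (mu + 1)]
    ring_nf
  have hV2 : ∑ j ∈ Finset.range (q + 2), (j : ℝ) * (Cc (q + 1 - j) lam * Cc j (mu + 1))
      = (mu + 1) * Cc q (lam + mu + 2) := by
    rw [Finset.sum_range_succ']
    simp only [Nat.cast_zero, zero_mul, add_zero]
    have step2 : ∀ k ∈ Finset.range (q + 1),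
        ((k + 1 : ℕ) : ℝ) * (Cc (q + 1 - (k + 1)) lam * Cc (k + 1) (mu + 1))
        = (mu + 1) * (Cc (q - k) lam * Cc k (mu + 2)) := by
      intro k hk
      have h1 : q + 1 - (k + 1) = q - k := by omega
      rw [h1]
      have habs := Cc_absorb k (mu + 1)
      rw [show mu + 1 + 1 = mu + 2 by ring] at habs
      push_cast
      linear_combination Cc (q - k) lam * habs
    rw [Finset.sum_congr rfl step2, ← Finset.mul_sum, Cc_vandermonde q lam (mu + 2)]
    ring_nf
  rw [hV1, hV2]
  have hP := Cc_pascal q (lam + mu + 1)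
  rw [show lam + mu + 1 + 1 = lam + mu + 2 by ring] at hP
  rw [hP]
  ring

lemma pochC_natCast (n : ℕ) (x : ℝ) : pochC n x = Cc n x := by
  simp [pochC, Cc]

lemma pochC_sub (p ℓ : ℕ) (h : ℓ ≤ p) (x : ℝ) : pochC ((p : ℤ) - ℓ) x = Cc (p - ℓ) x := by
  have h0 : (0 : ℤ) ≤ (p : ℤ) - ℓ := by omega
  have ht : ((p : ℤ) - ℓ).toNat = p - ℓ := by omega
  rw [pochC, if_pos h0, ht]
  rfl

theorem stmt11 (lam mu : ℝ) (p : ℕ) (hp : 1 ≤ p) :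
    ∑ ℓ ∈ Finset.range (p + 1), (ℓ : ℝ) ^ 2 * pochC ((p : ℤ) - ℓ) lam * pochC ℓ mu =
      mu * (pochC ((p : ℤ) - 1) (lam + mu + 2) + mu * pochC ((p : ℤ) - 2) (lam + mu + 2)) := by
  match p, hp with
  | 1, _ =>
    have h0 : ∀ x : ℝ, pochC (-1) x = 0 := fun x => by rw [pochC, if_neg (by norm_num)]
    have h1 : ∀ x : ℝ, pochC 0 x = 1 := fun x => by norm_num [pochC]
    have h2 : ∀ x : ℝ, pochC 1 x = x := fun x => by norm_num [pochC, ascPochhammer_one]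
    norm_num [Finset.sum_range_succ, h0, h1, h2]
  | (q + 2), _ =>
    have hL : ∀ ℓ ∈ Finset.range (q + 2 + 1),
        (ℓ : ℝ) ^ 2 * pochC (((q + 2 : ℕ) : ℤ) - ℓ) lam * pochC ℓ mu
        = (ℓ : ℝ) ^ 2 * Cc (q + 2 - ℓ) lam * Cc ℓ mu := by
      intro ℓ hℓ
      rw [Finset.mem_range] at hℓ
      rw [pochC_sub (q + 2) ℓ (by omega), pochC_natCast]
    rw [Finset.sum_congr rfl hL]
    have hr1 : ((q + 2 : ℕ) : ℤ) - 1 = ((q + 1 : ℕ) : ℤ) := by push_cast; ring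
    have hr2 : ((q + 2 : ℕ) : ℤ) - 2 = ((q : ℕ) : ℤ) := by push_cast; ring
    rw [hr1, hr2, pochC_natCast, pochC_natCast]
    exact key_sum q lam mu
end

section
/- For real λ, μ with λ + μ ≠ 0 and integer p ≥ 1, with C_n(λ) := (λ)_n/n! (C_n = 0 for n < 0), the following determinant identity holds: C_p(λ+μ) · μ·( C_{p−1}(λ+μ+2) + μ·C_{p−2}(λ+μ+2) ) − ( μ·C_{p−1}(λ+μ+1) )² = (λμ/(λ+μ)) · C_p(λ+μ) · C_{p−1}(λ+μ+2). -/
lemma pochC_natCast_s12 (n : ℕ) (x : ℝ) :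
    pochC n x = (ascPochhammer ℝ n).eval x / n.factorial := by
  simp [pochC]

lemma pochC_of_neg {n : ℤ} (hn : n < 0) (x : ℝ) : pochC n x = 0 :=
  if_neg hn.not_ge

lemma mul_pochC_of_nonpos {n : ℤ} (hn : n ≤ 0) (x : ℝ) : (n : ℝ) * pochC n x = 0 := by
  rcases hn.lt_or_eq with hn | rfl
  · rw [pochC_of_neg hn, mul_zero]
  · simp

lemma pochC_succ_left (n : ℤ) (x : ℝ) :
    ((n : ℝ) + 1) * pochC (n + 1) x = x * pochC n (x + 1) := by
  rcases lt_or_ge n 0 with hn | hn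
  · rw [pochC_of_neg hn, mul_zero]
    exact_mod_cast mul_pochC_of_nonpos (by omega : n + 1 ≤ 0) x
  lift n to ℕ using hn
  rw [show (n : ℤ) + 1 = (n + 1 : ℕ) by push_cast; ring, pochC_natCast_s12, pochC_natCast_s12,
    ascPochhammer_succ_left, Polynomial.eval_mul, Polynomial.eval_comp, Nat.factorial_succ]
  simp only [Polynomial.eval_X, Polynomial.eval_add, Polynomial.eval_one]
  push_cast
  field_simp

lemma pochC_succ_right (n : ℤ) (x : ℝ) :
    ((n : ℝ) + 1) * pochC (n + 1) x = (x + n) * pochC n x := by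
  rcases lt_or_ge n 0 with hn | hn
  · rw [pochC_of_neg hn, mul_zero]
    exact_mod_cast mul_pochC_of_nonpos (by omega : n + 1 ≤ 0) x
  lift n to ℕ using hn
  rw [show (n : ℤ) + 1 = (n + 1 : ℕ) by push_cast; ring, pochC_natCast_s12, pochC_natCast_s12,
    ascPochhammer_succ_eval, Nat.factorial_succ]
  push_cast
  field_simp

lemma pochC_add_one (n : ℤ) (x : ℝ) :
    pochC n (x + 1) = pochC n x + pochC (n - 1) (x + 1) := by
  rcases lt_trichotomy n 0 with hn | rfl | hn
  · simp [pochC_of_neg hn, pochC_of_neg (by omega : n - 1 < 0)]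
  · simp [pochC]
  obtain ⟨n, rfl⟩ : ∃ m : ℕ, n = m + 1 := ⟨(n - 1).toNat, by omega⟩
  have h := pochC_succ_left n x
  have h' := pochC_succ_right n (x + 1)
  rw [add_sub_cancel_right]
  apply mul_left_cancel₀ (by positivity : (n : ℝ) + 1 ≠ 0)
  linear_combination h' - h

theorem stmt12 (lam mu : ℝ) (hlm : lam + mu ≠ 0) (p : ℕ) (hp : 1 ≤ p) :
    pochC p (lam + mu) *
        (mu * (pochC ((p : ℤ) - 1) (lam + mu + 2) + mu * pochC ((p : ℤ) - 2) (lam + mu + 2))) -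
      (mu * pochC ((p : ℤ) - 1) (lam + mu + 1)) ^ 2 =
    (lam * mu / (lam + mu)) * pochC p (lam + mu) * pochC ((p : ℤ) - 1) (lam + mu + 2) := by
  set m : ℤ := p - 1 with hm
  rw [show (p : ℤ) - 2 = m - 1 by omega, show (p : ℤ) = m + 1 by omega]
  have hm1 : (m : ℝ) + 1 ≠ 0 := by
    rw [show (m : ℝ) + 1 = p by rw [hm]; push_cast; ring]
    positivity
  have hleft := pochC_succ_left m (lam + mu)
  have hpascal := pochC_add_one m (lam + mu + 1)
  have hright := pochC_succ_right (m - 1) (lam + mu + 2)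
  rw [add_assoc, one_add_one_eq_two] at hpascal
  rw [sub_add_cancel, Int.cast_sub, Int.cast_one] at hright
  set a := pochC m (lam + mu + 2)
  set b := pochC (m - 1) (lam + mu + 2)
  have hd : pochC m (lam + mu + 1) = a - b := by rw [hpascal]; ring
  have hc : pochC (m + 1) (lam + mu) = (lam + mu) * (a - b) / (m + 1) := by
    rw [eq_div_iff hm1, mul_comm, hleft, hd]
  rw [hc, hd]
  field_simp
  linear_combination (-mu ^ 2 * (a - b)) * hright
end

section
/- With coordinates u₁ = (z₁+z₂)/2, u₂ = (z₁−z₂)/2 on 𝔻², the curvature of the kernel K^{(λ,μ)}(z,z) = (1−|z₁|²)^{−λ}(1−|z₂|²)^{−μ} in the u-coordinates, restricted to the diagonal {u₂ = 0}, equals (1−|u₁|²)^{−2} · [[λ+μ, λ−μ],[λ−μ, λ+μ]]; i.e. ∂̄_{u_i}∂_{u_j} log K^{(λ,μ)} evaluated at u₂ = 0 gives this matrix. -/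
/-- Wirtinger derivatives on ℂ × ℂ. -/
noncomputable def wd1 (f : ℂ × ℂ → ℂ) (z : ℂ × ℂ) : ℂ :=
  (1/2) * (fderiv ℝ f z (1, 0) - Complex.I * fderiv ℝ f z (Complex.I, 0))

noncomputable def wd2 (f : ℂ × ℂ → ℂ) (z : ℂ × ℂ) : ℂ :=
  (1/2) * (fderiv ℝ f z (0, 1) - Complex.I * fderiv ℝ f z (0, Complex.I))

noncomputable def wb1 (f : ℂ × ℂ → ℂ) (z : ℂ × ℂ) : ℂ :=
  (1/2) * (fderiv ℝ f z (1, 0) + Complex.I * fderiv ℝ f z (Complex.I, 0))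

noncomputable def wb2 (f : ℂ × ℂ → ℂ) (z : ℂ × ℂ) : ℂ :=
  (1/2) * (fderiv ℝ f z (0, 1) + Complex.I * fderiv ℝ f z (0, Complex.I))

/-- log K^{(λ,μ)} in the coordinates u₁ = (z₁+z₂)/2, u₂ = (z₁−z₂)/2,
i.e. z₁ = u₁+u₂, z₂ = u₁−u₂. -/
noncomputable def logKu (lam mu : ℝ) : ℂ × ℂ → ℂ := fun u =>
  ((Real.log ((1 - ‖u.1 + u.2‖ ^ 2) ^ (-lam) *
      (1 - ‖u.1 - u.2‖ ^ 2) ^ (-mu)) : ℝ) : ℂ)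

/-!
Since `z₁ = u₁ + u₂` and `z₂ = u₁ - u₂` are ℂ-linear in `u`, the Wirtinger derivatives in `u` of
`a g(z₁) + b h(z₂)` are `a ∂g(z₁) ± b ∂h(z₂)` (and likewise for `∂̄`), the sign being `-` exactly
for `u₂`. On the bidisc `log K = -λ log(1 - |z₁|²) - μ log(1 - |z₂|²)`, and one-variable calculus
gives `∂ log(1 - |z|²) = -z̄ / (1 - |z|²)` and `∂̄ (z̄ / (1 - |z|²)) = (1 - |z|²)⁻²`. Applying the rule
twice, the entry `(i, j)` on the diagonal `z₁ = z₂ = u₁` is `(λ ± μ) (1 - |u₁|²)⁻²`.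
-/
open Complex Filter Topology ContinuousLinearMap

/-- The one-variable Wirtinger derivatives `∂/∂z` and `∂/∂z̄`. -/
noncomputable def dz (g : ℂ → ℂ) (z : ℂ) : ℂ := (1/2) * (fderiv ℝ g z 1 - I * fderiv ℝ g z I)

noncomputable def dzb (g : ℂ → ℂ) (z : ℂ) : ℂ := (1/2) * (fderiv ℝ g z 1 + I * fderiv ℝ g z I)

/-- `a g(z₁) + b h(z₂)` written in the coordinates `u`, where `z₁ = u₁ + u₂`, `z₂ = u₁ - u₂`. -/
def addSubComb (a b : ℂ) (g h : ℂ → ℂ) (u : ℂ × ℂ) : ℂ :=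
  a * g (u.1 + u.2) + b * h (u.1 - u.2)

lemma wirtinger_congr_of_eventuallyEq {f g : ℂ × ℂ → ℂ} {u : ℂ × ℂ} (h : f =ᶠ[𝓝 u] g) :
    wd1 f u = wd1 g u ∧ wd2 f u = wd2 g u ∧ wb1 f u = wb1 g u ∧ wb2 f u = wb2 g u := by
  simp only [wd1, wd2, wb1, wb2, h.fderiv_eq, and_self]

section addSubComb

variable {a b : ℂ} {g h : ℂ → ℂ} {u : ℂ × ℂ}

lemma fderiv_addSubComb_apply (hg : DifferentiableAt ℝ g (u.1 + u.2))
    (hh : DifferentiableAt ℝ h (u.1 - u.2)) (v : ℂ × ℂ) :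
    fderiv ℝ (addSubComb a b g h) u v =
      a * fderiv ℝ g (u.1 + u.2) (v.1 + v.2) + b * fderiv ℝ h (u.1 - u.2) (v.1 - v.2) := by
  have hF : HasFDerivAt (addSubComb a b g h)
      (a • (fderiv ℝ g (u.1 + u.2)).comp (fst ℝ ℂ ℂ + snd ℝ ℂ ℂ) +
        b • (fderiv ℝ h (u.1 - u.2)).comp (fst ℝ ℂ ℂ - snd ℝ ℂ ℂ)) u :=
    ((hg.hasFDerivAt.comp u (fst ℝ ℂ ℂ + snd ℝ ℂ ℂ).hasFDerivAt).const_mul a).add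
      ((hh.hasFDerivAt.comp u (fst ℝ ℂ ℂ - snd ℝ ℂ ℂ).hasFDerivAt).const_mul b)
  simp only [hF.fderiv, add_apply, sub_apply, smul_apply, comp_apply, coe_fst', coe_snd',
    smul_eq_mul]

variable (hg : DifferentiableAt ℝ g (u.1 + u.2)) (hh : DifferentiableAt ℝ h (u.1 - u.2))
include hg hh

lemma wd1_addSubComb : wd1 (addSubComb a b g h) u = addSubComb a b (dz g) (dz h) u := by
  simp only [wd1, dz, addSubComb, fderiv_addSubComb_apply hg hh]
  simp
  ring

lemma wd2_addSubComb : wd2 (addSubComb a b g h) u = addSubComb a (-b) (dz g) (dz h) u := by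
  simp only [wd2, dz, addSubComb, fderiv_addSubComb_apply hg hh]
  simp
  ring

lemma wb1_addSubComb : wb1 (addSubComb a b g h) u = addSubComb a b (dzb g) (dzb h) u := by
  simp only [wb1, dzb, addSubComb, fderiv_addSubComb_apply hg hh]
  simp
  ring

lemma wb2_addSubComb : wb2 (addSubComb a b g h) u = addSubComb a (-b) (dzb g) (dzb h) u := by
  simp only [wb2, dzb, addSubComb, fderiv_addSubComb_apply hg hh]
  simp
  ring

end addSubComb

noncomputable def logOneSubNormSq (z : ℂ) : ℂ := Real.log (1 - ‖z‖ ^ 2)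

noncomputable def conjDivOneSubNormSq (z : ℂ) : ℂ := (1 - ‖z‖ ^ 2)⁻¹ • starRingEnd ℂ z

section disc

variable {z : ℂ}

lemma one_sub_norm_sq_pos (hz : ‖z‖ < 1) : 0 < 1 - ‖z‖ ^ 2 := by
  nlinarith [norm_nonneg z]

lemma hasFDerivAt_one_sub_norm_sq (z : ℂ) :
    HasFDerivAt (fun z : ℂ => 1 - ‖z‖ ^ 2) (-(2 • innerSL ℝ z)) z := by
  simpa using ((hasFDerivAt_id z).norm_sq).const_sub 1

lemma hasFDerivAt_logOneSubNormSq (hz : ‖z‖ < 1) :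
    HasFDerivAt logOneSubNormSq
      (ofRealCLM.comp ((1 - ‖z‖ ^ 2)⁻¹ • -(2 • innerSL ℝ z))) z :=
  ofRealCLM.hasFDerivAt.comp z
    ((hasFDerivAt_one_sub_norm_sq z).log (one_sub_norm_sq_pos hz).ne')

lemma hasFDerivAt_conjDivOneSubNormSq (hz : ‖z‖ < 1) :
    HasFDerivAt conjDivOneSubNormSq
      ((1 - ‖z‖ ^ 2)⁻¹ • conjCLE.toContinuousLinearMap +
        (-((1 - ‖z‖ ^ 2) ^ 2)⁻¹ • -(2 • innerSL ℝ z)).smulRight (starRingEnd ℂ z)) z :=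
  ((hasDerivAt_inv (one_sub_norm_sq_pos hz).ne').comp_hasFDerivAt z
    (hasFDerivAt_one_sub_norm_sq z)).smul conjCLE.hasFDerivAt

lemma dz_logOneSubNormSq (hz : ‖z‖ < 1) :
    dz logOneSubNormSq z = -conjDivOneSubNormSq z := by
  rw [dz, (hasFDerivAt_logOneSubNormSq hz).fderiv, conjDivOneSubNormSq]
  apply Complex.ext <;> simp [Complex.inner] <;> ring

lemma dzb_conjDivOneSubNormSq (hz : ‖z‖ < 1) :
    dzb conjDivOneSubNormSq z = (((1 - ‖z‖ ^ 2) ^ 2)⁻¹ : ℝ) := by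
  have ht := one_sub_norm_sq_pos hz
  have hsq : z.re ^ 2 + z.im ^ 2 = 1 - (1 - ‖z‖ ^ 2) := by rw [Complex.sq_norm, normSq_apply]; ring
  rw [dzb, (hasFDerivAt_conjDivOneSubNormSq hz).fderiv]
  generalize 1 - ‖z‖ ^ 2 = t at *
  apply Complex.ext <;> simp [Complex.inner, -ofReal_pow]
  · field_simp
    linear_combination 2 * hsq
  · ring

end disc

def bidiscU : Set (ℂ × ℂ) := {u | ‖u.1 + u.2‖ < 1 ∧ ‖u.1 - u.2‖ < 1}

lemma isOpen_bidiscU : IsOpen bidiscU :=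
  (isOpen_lt (continuous_fst.add continuous_snd).norm continuous_const).inter
    (isOpen_lt (continuous_fst.sub continuous_snd).norm continuous_const)

section logKu

variable {lam mu : ℝ} {u : ℂ × ℂ}

lemma logKu_eq_addSubComb (hu : u ∈ bidiscU) :
    logKu lam mu u = addSubComb (-lam) (-mu) logOneSubNormSq logOneSubNormSq u := by
  have h₁ := one_sub_norm_sq_pos hu.1
  have h₂ := one_sub_norm_sq_pos hu.2
  rw [logKu, Real.log_mul (Real.rpow_pos_of_pos h₁ _).ne' (Real.rpow_pos_of_pos h₂ _).ne',
    Real.log_rpow h₁, Real.log_rpow h₂, addSubComb, logOneSubNormSq, logOneSubNormSq]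
  push_cast
  ring

lemma logKu_eventuallyEq (hu : u ∈ bidiscU) :
    logKu lam mu =ᶠ[𝓝 u] addSubComb (-lam) (-mu) logOneSubNormSq logOneSubNormSq :=
  eventually_of_mem (isOpen_bidiscU.mem_nhds hu) fun _ hv => logKu_eq_addSubComb hv

lemma wd1_logKu (hu : u ∈ bidiscU) :
    wd1 (logKu lam mu) u = addSubComb lam mu conjDivOneSubNormSq conjDivOneSubNormSq u := by
  rw [(wirtinger_congr_of_eventuallyEq (logKu_eventuallyEq hu)).1,
    wd1_addSubComb (hasFDerivAt_logOneSubNormSq hu.1).differentiableAt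
      (hasFDerivAt_logOneSubNormSq hu.2).differentiableAt]
  simp only [addSubComb, dz_logOneSubNormSq hu.1, dz_logOneSubNormSq hu.2]
  ring

lemma wd2_logKu (hu : u ∈ bidiscU) :
    wd2 (logKu lam mu) u = addSubComb lam (-mu) conjDivOneSubNormSq conjDivOneSubNormSq u := by
  rw [(wirtinger_congr_of_eventuallyEq (logKu_eventuallyEq hu)).2.1,
    wd2_addSubComb (hasFDerivAt_logOneSubNormSq hu.1).differentiableAt
      (hasFDerivAt_logOneSubNormSq hu.2).differentiableAt]
  simp only [addSubComb, dz_logOneSubNormSq hu.1, dz_logOneSubNormSq hu.2]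
  ring

end logKu

theorem stmt15_general (lam mu : ℝ) (u₁ : ℂ)
    (hu : ‖u₁‖ < 1) :
    !![wb1 (wd1 (logKu lam mu)) (u₁, 0), wb1 (wd2 (logKu lam mu)) (u₁, 0);
       wb2 (wd1 (logKu lam mu)) (u₁, 0), wb2 (wd2 (logKu lam mu)) (u₁, 0)] =
      ((1 / (1 - ‖u₁‖ ^ 2) ^ 2 : ℝ) : ℂ) •
        !![((lam + mu : ℝ) : ℂ), ((lam - mu : ℝ) : ℂ);
           ((lam - mu : ℝ) : ℂ), ((lam + mu : ℝ) : ℂ)] := by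
  have hp : ((u₁, 0) : ℂ × ℂ) ∈ bidiscU := by simpa [bidiscU] using hu
  have hG : DifferentiableAt ℝ conjDivOneSubNormSq (u₁ + 0) := by
    simpa using (hasFDerivAt_conjDivOneSubNormSq hu).differentiableAt
  have hG' : DifferentiableAt ℝ conjDivOneSubNormSq (u₁ - 0) := by simpa using hG
  have h₁ := wirtinger_congr_of_eventuallyEq <|
    eventually_of_mem (isOpen_bidiscU.mem_nhds hp) fun _ hv => wd1_logKu (lam := lam) (mu := mu) hv
  have h₂ := wirtinger_congr_of_eventuallyEq <|
    eventually_of_mem (isOpen_bidiscU.mem_nhds hp) fun _ hv => wd2_logKu (lam := lam) (mu := mu) hv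
  rw [h₁.2.2.1, h₁.2.2.2, h₂.2.2.1, h₂.2.2.2, wb1_addSubComb hG hG', wb2_addSubComb hG hG',
    wb1_addSubComb hG hG', wb2_addSubComb hG hG']
  simp only [addSubComb, add_zero, sub_zero, dzb_conjDivOneSubNormSq hu]
  ext i j
  fin_cases i <;> fin_cases j <;> simp <;> ring

theorem stmt15 (lam mu : ℝ) (hl : 0 < lam) (hm : 0 < mu) (u₁ : ℂ)
    (hu : ‖u₁‖ < 1) :
    !![wb1 (wd1 (logKu lam mu)) (u₁, 0), wb1 (wd2 (logKu lam mu)) (u₁, 0);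
       wb2 (wd1 (logKu lam mu)) (u₁, 0), wb2 (wd2 (logKu lam mu)) (u₁, 0)] =
      ((1 / (1 - ‖u₁‖ ^ 2) ^ 2 : ℝ) : ℂ) •
        !![((lam + mu : ℝ) : ℂ), ((lam - mu : ℝ) : ℂ);
           ((lam - mu : ℝ) : ℂ), ((lam + mu : ℝ) : ℂ)] :=
  stmt15_general lam mu u₁ hu
end
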